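/- Theorem 2 (leakage and seepage rates of the single-site leakage damping channel): for the single-site leakage damping channel Λ, tr(Π_l · Λ(Π_c / 2^n)) = ∑_{i=1}^n p_i, where p_i := 2^{−n} ∑_{k ∈ C, k' ∈ B_i} p_{k,k'}, and tr(Π_c · Λ(Π_l / (3^n − 2^n))) = (2^n / (3^n − 2^n)) ∑_{i=1}^n q_i, where q_i := 2^{−n} ∑_{k ∈ C, k' ∈ B_i} p_{k',k}. -/

import Mathlib

open Matrix Finset

noncomputable section

/-- Basis strings of an n-qutrit system. -/
abbrev TritStr (n : ℕ) := Fin n → Fin 3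

/-- k ∈ C: a computational string (no site equals 2). -/
def inC {n : ℕ} (k : TritStr n) : Prop := ∀ j, k j ≠ 2

/-- k ∈ B_i: site i equals 2 and every other site is 0 or 1. -/
def inB {n : ℕ} (i : Fin n) (k : TritStr n) : Prop :=
  k i = 2 ∧ ∀ j, j ≠ i → k j ≠ 2

/-- k ∈ B = ∪ᵢ B_i. -/
def inBall {n : ℕ} (k : TritStr n) : Prop := ∃ i, inB i k

/-- (k, k') ∈ W = (C×B) ∪ (B×C) ∪ ∪ᵢ(B_i×B_i) ∪ (C×C). -/
def inW {n : ℕ} (k k' : TritStr n) : Prop :=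
  (inC k ∧ inBall k') ∨ (inBall k ∧ inC k') ∨ (∃ i, inB i k ∧ inB i k') ∨
    (inC k ∧ inC k')

instance {n : ℕ} (k : TritStr n) : Decidable (inC k) := by
  unfold inC; infer_instance

instance {n : ℕ} (i : Fin n) (k : TritStr n) : Decidable (inB i k) := by
  unfold inB; infer_instance

instance {n : ℕ} (k : TritStr n) : Decidable (inBall k) := by
  unfold inBall; infer_instance

instance {n : ℕ} (k k' : TritStr n) : Decidable (inW k k') := by
  unfold inW; infer_instance

/-- ∑_{k' : (k,k') ∈ W} p_{k,k'}, the total damping probability out of `k`. -/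
def rowSum {n : ℕ} (p : TritStr n → TritStr n → ℝ) (k : TritStr n) : ℝ :=
  ∑ k' ∈ Finset.univ.filter (fun k' => inW k k'), p k k'

/-- The Kraus operator E₀ of the single-site leakage damping channel: diagonal
with (k,k) entry √(1 − ∑_{k'} p_{k,k'}) for k ∈ C ∪ B and 1 otherwise. -/
def E0 {n : ℕ} (p : TritStr n → TritStr n → ℝ) :
    Matrix (TritStr n) (TritStr n) ℂ :=
  Matrix.diagonal fun k =>
    if inC k ∨ inBall k then ((Real.sqrt (1 - rowSum p k) : ℝ) : ℂ) else 1

/-- The single-site leakage damping channel (Definition 1):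
Λ(ρ) = E₀ ρ E₀† + ∑_{(k,k') ∈ W} p_{k,k'} ⟨k|ρ|k⟩ |k'⟩⟨k'|. -/
def leakChannel {n : ℕ} (p : TritStr n → TritStr n → ℝ)
    (ρ : Matrix (TritStr n) (TritStr n) ℂ) : Matrix (TritStr n) (TritStr n) ℂ :=
  E0 p * ρ * (E0 p)ᴴ +
    ∑ kk' ∈ Finset.univ.filter (fun kk' : TritStr n × TritStr n => inW kk'.1 kk'.2),
      ((p kk'.1 kk'.2 : ℂ) * ρ kk'.1 kk'.1) • Matrix.single kk'.2 kk'.2 1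

/-- The computational projector Π_c on the n-qutrit space. -/
def compProj (n : ℕ) : Matrix (TritStr n) (TritStr n) ℂ :=
  Matrix.diagonal fun k => if inC k then 1 else 0

/-- The leakage projector Π_l = I − Π_c. -/
def leakProj (n : ℕ) : Matrix (TritStr n) (TritStr n) ℂ := 1 - compProj n

/-- The average leak probability p_i = 2^{−n} ∑_{k ∈ C, k' ∈ B_i} p_{k,k'}. -/
def leakRate {n : ℕ} (p : TritStr n → TritStr n → ℝ) (i : Fin n) : ℝ :=
  ((2 : ℝ) ^ n)⁻¹ *
    ∑ k ∈ Finset.univ.filter (fun k => inC k),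
      ∑ k' ∈ Finset.univ.filter (fun k' => inB i k'), p k k'

/-- The average seep probability q_i = 2^{−n} ∑_{k ∈ C, k' ∈ B_i} p_{k',k}. -/
def seepRate {n : ℕ} (p : TritStr n → TritStr n → ℝ) (i : Fin n) : ℝ :=
  ((2 : ℝ) ^ n)⁻¹ *
    ∑ k ∈ Finset.univ.filter (fun k => inC k),
      ∑ k' ∈ Finset.univ.filter (fun k' => inB i k'), p k' k

/-! Since `E0 p` is diagonal, the term `E0 p * ρ * (E0 p)ᴴ` of a diagonal `ρ` is supported where `ρ`
is, so between a diagonal state and an orthogonal diagonal projector only the jump terms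
`p k k' • ⟨k|ρ|k⟩ |k'⟩⟨k'|` contribute to the trace. The pairs of `W` leaving `C` are exactly
`C × B` and those entering `C` are exactly `B × C`; since the `B i` partition `B`, the two traces
split into the per-site rates. -/

section Strings

variable {n : ℕ} {i : Fin n} {k k' : TritStr n}

lemma not_inC_of_inB (h : inB i k) : ¬ inC k := fun hC => hC i h.1

lemma not_inC_of_inBall (h : inBall k) : ¬ inC k := h.elim fun _ => not_inC_of_inB

lemma inB.unique {j : Fin n} (hi : inB i k) (hj : inB j k) : i = j :=
  by_contra fun hij => hj.2 i hij hi.1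

lemma filter_inBall_eq_biUnion :
    univ.filter (inBall (n := n)) = univ.biUnion fun i => univ.filter (inB i) := by
  ext k
  simp [inBall]

lemma sum_filter_inBall {M : Type*} [AddCommMonoid M] (h : TritStr n → M) :
    ∑ k ∈ univ.filter inBall, h k = ∑ i, ∑ k ∈ univ.filter (inB i), h k := by
  rw [filter_inBall_eq_biUnion, sum_biUnion]
  intro i _ j _ hij
  simp only [Function.onFun, disjoint_filter]
  exact fun k _ hi hj => hij (hi.unique hj)

lemma inW_iff_inBall_of_inC_of_not_inC (hk : inC k) (hk' : ¬ inC k') :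
    inW k k' ↔ inBall k' := by
  refine ⟨fun hW => ?_, fun hB => Or.inl ⟨hk, hB⟩⟩
  rcases hW with ⟨_, hB⟩ | ⟨hB, _⟩ | ⟨i, hi, _⟩ | ⟨_, hC⟩
  · exact hB
  · exact absurd hk (not_inC_of_inBall hB)
  · exact absurd hk (not_inC_of_inB hi)
  · exact absurd hC hk'

lemma inW_iff_inBall_of_not_inC_of_inC (hk : ¬ inC k) (hk' : inC k') :
    inW k k' ↔ inBall k := by
  refine ⟨fun hW => ?_, fun hB => Or.inr (Or.inl ⟨hB, hk'⟩)⟩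
  rcases hW with ⟨hC, _⟩ | ⟨hB, _⟩ | ⟨i, _, hi⟩ | ⟨hC, _⟩
  · exact absurd hC hk
  · exact hB
  · exact absurd hk' (not_inC_of_inB hi)
  · exact absurd hC hk

end Strings

section Sums

variable {n : ℕ} {M : Type*} [AddCommMonoid M] (h : TritStr n → TritStr n → M)

lemma filter_inC_not_inC_inW :
    univ.filter (fun x : TritStr n × TritStr n => inC x.1 ∧ ¬ inC x.2 ∧ inW x.1 x.2) =
      univ.filter inC ×ˢ univ.filter inBall := by
  ext ⟨k, k'⟩
  simp only [mem_filter, mem_univ, true_and, mem_product]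
  exact ⟨fun ⟨hk, hk', hW⟩ => ⟨hk, (inW_iff_inBall_of_inC_of_not_inC hk hk').1 hW⟩,
    fun ⟨hk, hB⟩ => ⟨hk, not_inC_of_inBall hB, Or.inl ⟨hk, hB⟩⟩⟩

lemma filter_not_inC_inC_inW :
    univ.filter (fun x : TritStr n × TritStr n => ¬ inC x.1 ∧ inC x.2 ∧ inW x.1 x.2) =
      univ.filter inBall ×ˢ univ.filter inC := by
  ext ⟨k, k'⟩
  simp only [mem_filter, mem_univ, true_and, mem_product]
  exact ⟨fun ⟨hk, hk', hW⟩ => ⟨(inW_iff_inBall_of_not_inC_of_inC hk hk').1 hW, hk'⟩,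
    fun ⟨hB, hk'⟩ => ⟨not_inC_of_inBall hB, hk', Or.inr (Or.inl ⟨hB, hk'⟩)⟩⟩

lemma sum_inC_product_inBall :
    ∑ x ∈ univ.filter inC ×ˢ univ.filter inBall, h x.1 x.2 =
      ∑ i, ∑ k ∈ univ.filter inC, ∑ k' ∈ univ.filter (inB i), h k k' := by
  simp only [sum_product, sum_filter_inBall]
  exact sum_comm

lemma sum_inBall_product_inC :
    ∑ x ∈ univ.filter inBall ×ˢ univ.filter inC, h x.1 x.2 =
      ∑ i, ∑ k ∈ univ.filter inC, ∑ k' ∈ univ.filter (inB i), h k' k := by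
  rw [sum_product_right]
  simp only [sum_filter_inBall]
  exact sum_comm

end Sums

lemma leakProj_eq_diagonal (n : ℕ) :
    leakProj n = diagonal fun k => if ¬ inC k then 1 else 0 := by
  rw [leakProj, compProj, ← diagonal_one, diagonal_sub]
  congr 1 with k
  split_ifs <;> simp_all

section Channel

variable {n : ℕ} (p : TritStr n → TritStr n → ℝ)

lemma trace_diagonal_mul_leakChannel_diagonal {f g : TritStr n → ℂ}
    (hfg : ∀ k, g k * f k = 0) :
    trace (diagonal g * leakChannel p (diagonal f)) =
      ∑ x ∈ univ.filter (fun x : TritStr n × TritStr n => inW x.1 x.2),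
        (p x.1 x.2 : ℂ) * f x.1 * g x.2 := by
  obtain ⟨e, he⟩ : ∃ e, E0 p = diagonal e := ⟨_, rfl⟩
  have hE0 : trace (diagonal g * (E0 p * diagonal f * (E0 p)ᴴ)) = 0 := by
    simp only [he, diagonal_conjTranspose, diagonal_mul_diagonal, trace_diagonal]
    exact sum_eq_zero fun k _ => by linear_combination (e k * star e k) * hfg k
  rw [leakChannel, mul_add, trace_add, hE0, zero_add, mul_sum, trace_sum]
  refine sum_congr rfl fun x _ => ?_
  rw [Matrix.mul_smul, trace_smul, trace_mul_single, diagonal_apply_eq, diagonal_apply_eq]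
  simp [mul_assoc]

lemma trace_diagonal_indicator_mul_leakChannel (P Q : TritStr n → Prop) [DecidablePred P]
    [DecidablePred Q] (hPQ : ∀ k, P k → ¬ Q k) (c : ℂ) :
    trace (diagonal (fun k => if Q k then 1 else 0) *
        leakChannel p (c • diagonal fun k => if P k then 1 else 0)) =
      c * ((∑ x ∈ univ.filter (fun x : TritStr n × TritStr n => P x.1 ∧ Q x.2 ∧ inW x.1 x.2),
        p x.1 x.2 : ℝ) : ℂ) := by
  rw [← diagonal_smul, trace_diagonal_mul_leakChannel_diagonal]
  · rw [Complex.ofReal_sum, mul_sum, sum_filter, sum_filter]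
    refine sum_congr rfl fun x _ => ?_
    by_cases hP : P x.1 <;> by_cases hQ : Q x.2 <;> by_cases hW : inW x.1 x.2 <;>
      simp [hP, hQ, hW, mul_comm]
  · intro k
    by_cases hP : P k <;> simp [hP, hPQ k]

end Channel

theorem single_site_leakage_rates_general (n : ℕ)
    (p : TritStr n → TritStr n → ℝ) :
    Matrix.trace (leakProj n * leakChannel p (((2 : ℂ) ^ n)⁻¹ • compProj n)) =
        ((∑ i, leakRate p i : ℝ) : ℂ) ∧
      Matrix.trace (compProj n *
          leakChannel p (((3 : ℂ) ^ n - 2 ^ n)⁻¹ • leakProj n)) =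
        (((2 : ℝ) ^ n / ((3 : ℝ) ^ n - 2 ^ n) * ∑ i, seepRate p i : ℝ) : ℂ) := by
  rw [leakProj_eq_diagonal, compProj,
    trace_diagonal_indicator_mul_leakChannel p _ _ fun k hk hk' => hk' hk,
    trace_diagonal_indicator_mul_leakChannel p _ _ fun k hk hk' => hk hk',
    filter_inC_not_inC_inW, sum_inC_product_inBall,
    filter_not_inC_inC_inW, sum_inBall_product_inC]
  constructor
  · simp [leakRate, mul_sum]
  · have h2n : (2 : ℂ) ^ n ≠ 0 := pow_ne_zero _ two_ne_zero
    push_cast [seepRate, ← mul_sum]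
    rw [div_mul_eq_mul_div, mul_inv_cancel_left₀ h2n, ← div_eq_inv_mul]

/-- Theorem 2 (leakage and seepage rates of the single-site leakage damping
channel): tr(Π_l Λ(Π_c / 2^n)) = ∑ᵢ pᵢ and
tr(Π_c Λ(Π_l / (3^n − 2^n))) = (2^n/(3^n − 2^n)) ∑ᵢ qᵢ. -/
theorem single_site_leakage_rates (n : ℕ) (hn : 1 ≤ n)
    (p : TritStr n → TritStr n → ℝ)
    (hpos : ∀ k k', inW k k' → 0 ≤ p k k')
    (hsum : ∀ k : TritStr n, rowSum p k ≤ 1) :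
    Matrix.trace (leakProj n * leakChannel p (((2 : ℂ) ^ n)⁻¹ • compProj n)) =
        ((∑ i, leakRate p i : ℝ) : ℂ) ∧
      Matrix.trace (compProj n *
          leakChannel p (((3 : ℂ) ^ n - 2 ^ n)⁻¹ • leakProj n)) =
        (((2 : ℝ) ^ n / ((3 : ℝ) ^ n - 2 ^ n) * ∑ i, seepRate p i : ℝ) : ℂ) :=
  single_site_leakage_rates_general n p
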